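/- Suppose the abstract equation u = Lf + N(u,u) is quantitatively well-posed, i.e. ‖Lf‖_S ≤ C₁‖f‖_D and ‖N(u,v)‖_S ≤ C₂‖u‖_S‖v‖_S for Banach spaces D, S. Define A₁f = Lf and A_m f = Σ_{k+l=m, k,l≥1} N(A_k f, A_l f) for m ≥ 2. Then there exists a constant C > 0 independent of m such that ‖A_m f‖_S ≤ (C‖f‖_D)^m for all m ∈ ℕ and f ∈ D. -/

import Mathlib

/-!
Dominate `‖A_m f‖` by the solution of the scalar recursion `x₁ = |C₁|‖f‖`,
`x_m = |C₂| ∑_{k+l=m} x_k x_l`. That recursion is the Catalan recursion, so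
`x_m = catalan (m-1) |C₂|^(m-1) (|C₁|‖f‖)^m`, and `catalan n ≤ 4ⁿ` gives geometric growth.
-/

open Finset

theorem catalan_le_four_pow (n : ℕ) : catalan n ≤ 4 ^ n :=
  calc catalan n ≤ (n + 1) * catalan n := Nat.le_mul_of_pos_left _ n.succ_pos
    _ = n.centralBinom := succ_mul_catalan_eq_centralBinom n
    _ ≤ 4 ^ n := Nat.centralBinom_le_four_pow n

theorem catalan_pred_eq_sum_Ico {m : ℕ} (hm : 2 ≤ m) :
    catalan (m - 1) = ∑ k ∈ Ico 1 m, catalan (k - 1) * catalan (m - k - 1) := by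
  obtain ⟨n, rfl⟩ : ∃ n, m = n + 2 := ⟨m - 2, by omega⟩
  rw [show n + 2 - 1 = n + 1 by omega, catalan_succ, Fin.sum_univ_eq_sum_range
    (fun i => catalan i * catalan (n - i)), sum_Ico_eq_sum_range]
  refine sum_congr (by congr 1) fun i hi => ?_
  rw [show 1 + i - 1 = i by omega, show n + 2 - (1 + i) - 1 = n - i by omega]

theorem norm_sum_le_abs_mul_sum_of_norm_le_mul_mul {ι E F G : Type*}
    [SeminormedAddCommGroup E] [SeminormedAddCommGroup F] [SeminormedAddCommGroup G]
    (N : E → F → G) {C : ℝ} (hN : ∀ u v, ‖N u v‖ ≤ C * ‖u‖ * ‖v‖)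
    (s : Finset ι) (u : ι → E) (v : ι → F) :
    ‖∑ i ∈ s, N (u i) (v i)‖ ≤ |C| * ∑ i ∈ s, ‖u i‖ * ‖v i‖ :=
  calc ‖∑ i ∈ s, N (u i) (v i)‖ ≤ ∑ i ∈ s, ‖N (u i) (v i)‖ := norm_sum_le _ _
    _ ≤ ∑ i ∈ s, |C| * (‖u i‖ * ‖v i‖) := sum_le_sum fun i _ => by
        rw [← mul_assoc]
        exact (hN _ _).trans (by gcongr; exact le_abs_self C)
    _ = |C| * ∑ i ∈ s, ‖u i‖ * ‖v i‖ := (mul_sum _ _ _).symm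

theorem le_catalan_mul_pow_of_le_mul_sum_Ico {x : ℕ → ℝ} {r K : ℝ} (hr : 0 ≤ r) (hK : 0 ≤ K)
    (hx₀ : ∀ m, 0 ≤ x m) (hx₁ : x 1 ≤ r)
    (hx : ∀ m, 2 ≤ m → x m ≤ K * ∑ k ∈ Ico 1 m, x k * x (m - k)) :
    ∀ m, 1 ≤ m → x m ≤ catalan (m - 1) * K ^ (m - 1) * r ^ m := by
  intro m
  induction m using Nat.strong_induction_on with
  | _ m ih =>
  intro hm
  rcases hm.eq_or_lt with rfl | hm
  · simpa using hx₁
  have hterm : ∀ k ∈ Ico 1 m, x k * x (m - k)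
      ≤ (catalan (k - 1) * catalan (m - k - 1) : ℕ) * (K ^ (m - 2) * r ^ m) := by
    intro k hk
    obtain ⟨hk₁, hkm⟩ := mem_Ico.mp hk
    calc x k * x (m - k)
        ≤ (catalan (k - 1) * K ^ (k - 1) * r ^ k)
          * (catalan (m - k - 1) * K ^ (m - k - 1) * r ^ (m - k)) :=
          mul_le_mul (ih k hkm hk₁) (ih (m - k) (by omega) (by omega)) (hx₀ _) (by positivity)
      _ = (catalan (k - 1) * catalan (m - k - 1) : ℕ)
          * (K ^ (k - 1 + (m - k - 1)) * r ^ (k + (m - k))) := by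
          push_cast
          ring
      _ = _ := by rw [show k - 1 + (m - k - 1) = m - 2 by omega, Nat.add_sub_cancel' hkm.le]
  calc x m ≤ K * ∑ k ∈ Ico 1 m, x k * x (m - k) := hx m hm
    _ ≤ K * ∑ k ∈ Ico 1 m,
          (catalan (k - 1) * catalan (m - k - 1) : ℕ) * (K ^ (m - 2) * r ^ m) :=
        mul_le_mul_of_nonneg_left (sum_le_sum hterm) hK
    _ = catalan (m - 1) * K ^ (m - 2 + 1) * r ^ m := by
        rw [← sum_mul, ← Nat.cast_sum, ← catalan_pred_eq_sum_Ico hm]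
        ring
    _ = catalan (m - 1) * K ^ (m - 1) * r ^ m := by rw [show m - 2 + 1 = m - 1 by omega]

theorem picard_iterate_bound_general
    {D S : Type*} [NormedAddCommGroup D] [NormedSpace ℝ D]
    [NormedAddCommGroup S] [NormedSpace ℝ S]
    (L : D →L[ℝ] S) (N : S →L[ℝ] S →L[ℝ] S) (C₁ C₂ : ℝ)
    (hL : ∀ f : D, ‖L f‖ ≤ C₁ * ‖f‖)
    (hN : ∀ u v : S, ‖N u v‖ ≤ C₂ * ‖u‖ * ‖v‖)
    (A : ℕ → D → S)
    (hA1 : ∀ f : D, A 1 f = L f)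
    (hAm : ∀ m : ℕ, 2 ≤ m → ∀ f : D,
      A m f = ∑ k ∈ Finset.Ico 1 m, N (A k f) (A (m - k) f)) :
    ∃ C : ℝ, 0 < C ∧ ∀ m : ℕ, 1 ≤ m → ∀ f : D, ‖A m f‖ ≤ (C * ‖f‖) ^ m := by
  refine ⟨(4 * |C₂| + 1) * (|C₁| + 1), by positivity, fun m hm f => ?_⟩
  have hA₁ : ‖A 1 f‖ ≤ |C₁| * ‖f‖ := by
    rw [hA1]
    exact (hL f).trans (by gcongr; exact le_abs_self C₁)
  have hAₙ (n : ℕ) (hn : 2 ≤ n) :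
      ‖A n f‖ ≤ |C₂| * ∑ k ∈ Ico 1 n, ‖A k f‖ * ‖A (n - k) f‖ := by
    rw [hAm n hn f]
    exact norm_sum_le_abs_mul_sum_of_norm_le_mul_mul (fun u v => N u v) hN _ _ _
  have h4 : (1 : ℝ) ≤ 4 * |C₂| + 1 := by linarith [abs_nonneg C₂]
  calc ‖A m f‖ ≤ catalan (m - 1) * |C₂| ^ (m - 1) * (|C₁| * ‖f‖) ^ m :=
        le_catalan_mul_pow_of_le_mul_sum_Ico (x := fun n => ‖A n f‖) (by positivity)
          (abs_nonneg C₂) (fun _ => norm_nonneg _) hA₁ hAₙ m hm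
    _ ≤ (4 : ℝ) ^ (m - 1) * |C₂| ^ (m - 1) * ((|C₁| + 1) * ‖f‖) ^ m := by
        gcongr
        · exact_mod_cast catalan_le_four_pow _
        · linarith
    _ = (4 * |C₂|) ^ (m - 1) * ((|C₁| + 1) * ‖f‖) ^ m := by ring
    _ ≤ (4 * |C₂| + 1) ^ m * ((|C₁| + 1) * ‖f‖) ^ m := by
        gcongr
        exact (pow_le_pow_left₀ (by positivity) (by linarith) _).trans
          (pow_le_pow_right₀ h4 (Nat.sub_le m 1))
    _ = ((4 * |C₂| + 1) * (|C₁| + 1) * ‖f‖) ^ m := by rw [← mul_pow, mul_assoc]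

/-- Under quantitative well-posedness (`‖Lf‖ ≤ C₁‖f‖`, `‖N(u,v)‖ ≤ C₂‖u‖‖v‖`), the Picard
iterates `A₁ f = Lf`, `A_m f = Σ_{k+l=m, k,l ≥ 1} N(A_k f, A_l f)` satisfy
`‖A_m f‖ ≤ (C‖f‖)^m` for a constant `C` independent of `m`. -/
theorem picard_iterate_bound
    {D S : Type*} [NormedAddCommGroup D] [NormedSpace ℝ D] [CompleteSpace D]
    [NormedAddCommGroup S] [NormedSpace ℝ S] [CompleteSpace S]
    (L : D →L[ℝ] S) (N : S →L[ℝ] S →L[ℝ] S) (C₁ C₂ : ℝ)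
    (hL : ∀ f : D, ‖L f‖ ≤ C₁ * ‖f‖)
    (hN : ∀ u v : S, ‖N u v‖ ≤ C₂ * ‖u‖ * ‖v‖)
    (A : ℕ → D → S)
    (hA1 : ∀ f : D, A 1 f = L f)
    (hAm : ∀ m : ℕ, 2 ≤ m → ∀ f : D,
      A m f = ∑ k ∈ Finset.Ico 1 m, N (A k f) (A (m - k) f)) :
    ∃ C : ℝ, 0 < C ∧ ∀ m : ℕ, 1 ≤ m → ∀ f : D, ‖A m f‖ ≤ (C * ‖f‖) ^ m :=
  picard_iterate_bound_general L N C₁ C₂ hL hN A hA1 hAm
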